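/- Let d2, a2, h > 0, let 0 ≤ x1 < L, and let 0 < q1 < q2. Suppose w1 is a solution of the upstream toxicant boundary value problem on [x1, L] with degradation rate q1 and w2 is a solution with degradation rate q2 (all other parameters d2, a2, h equal). Then w2(x) < w1(x) for every x ∈ (x1, L). (The solution of the upstream problem is strictly decreasing with respect to q.) -/
import Mathlib

open Set

/-- If a continuous function is negative at `x0`, it is negative on a small
closed interval of radius `δ ≤ c` around `x0`. -/
lemma exists_small_neg {f : ℝ → ℝ} (hf : Continuous f) {x0 : ℝ} (h : f x0 < 0)
    {c : ℝ} (hc : 0 < c) :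
    ∃ δ, 0 < δ ∧ δ ≤ c ∧ ∀ t, |t - x0| ≤ δ → f t < 0 := by
  have hev : ∀ᶠ t in nhds x0, f t < 0 :=
    hf.continuousAt.eventually_lt continuousAt_const h
  rw [Metric.eventually_nhds_iff] at hev
  obtain ⟨ε, hε, hball⟩ := hev
  refine ⟨min (ε/2) c, by positivity, min_le_right _ _, fun t ht => ?_⟩
  apply hball
  rw [Real.dist_eq]
  calc |t - x0| ≤ min (ε/2) c := ht
    _ ≤ ε/2 := min_le_left _ _
    _ < ε := by linarith

/-- Elementary maximum principle for the upstream operator: if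
`d2 u'' - a2 u' - q u < 0` on `[x1, L]`, `d2 u'(x1) - a2 u(x1) ≤ 0` and
`u'(L) = 0`, then `u > 0` on `[x1, L]`. -/
lemma upstream_max_principle (d2 a2 q x1 L : ℝ) (u : ℝ → ℝ)
    (hd2 : 0 < d2) (ha2 : 0 < a2) (hq : 0 < q) (hx1L : x1 < L)
    (hu : ContDiff ℝ 2 u)
    (hode : ∀ x ∈ Icc x1 L, d2 * deriv (deriv u) x - a2 * deriv u x - q * u x < 0)
    (hbc1 : d2 * deriv u x1 - a2 * u x1 ≤ 0)
    (hbcL : deriv u L = 0) :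
    ∀ x ∈ Icc x1 L, 0 < u x := by
  have hdu : Differentiable ℝ u ∧ Differentiable ℝ (deriv u) ∧
      Continuous (deriv (deriv u)) := by
    rw [show (2 : WithTop ℕ∞) = 1 + 1 from rfl, contDiff_succ_iff_deriv] at hu
    exact ⟨hu.1, (contDiff_one_iff_deriv.1 hu.2.2).1, (contDiff_one_iff_deriv.1 hu.2.2).2⟩
  obtain ⟨h1, h2, h3⟩ := hdu
  obtain ⟨x0, hx0, hmin⟩ := isCompact_Icc.exists_isMinOn (nonempty_Icc.2 hx1L.le)
    h1.continuous.continuousOn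
  intro x hx
  suffices h : 0 < u x0 from lt_of_lt_of_le h (hmin hx)
  by_contra hle
  push_neg at hle
  -- descent to the right yields a contradiction with minimality
  have right : ∀ δ : ℝ, 0 < δ → x0 + δ ≤ L →
      (∀ t ∈ Ioo x0 (x0 + δ), deriv u t < 0) → False := by
    intro δ hδ hδL hneg
    have anti : StrictAntiOn u (Icc x0 (x0 + δ)) := by
      apply strictAntiOn_of_deriv_neg (convex_Icc _ _) h1.continuous.continuousOn
      intro t ht
      rw [interior_Icc] at ht
      exact hneg t ht
    have hlt : u (x0 + δ) < u x0 :=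
      anti (left_mem_Icc.2 (by linarith)) (right_mem_Icc.2 (by linarith)) (by linarith)
    have hge : u x0 ≤ u (x0 + δ) := hmin ⟨by linarith [hx0.1], hδL⟩
    linarith
  -- ascent to the left yields a contradiction with minimality
  have left : ∀ δ : ℝ, 0 < δ → x1 ≤ x0 - δ →
      (∀ t ∈ Ioo (x0 - δ) x0, 0 < deriv u t) → False := by
    intro δ hδ hδ1 hpos
    have mono : StrictMonoOn u (Icc (x0 - δ) x0) := by
      apply strictMonoOn_of_deriv_pos (convex_Icc _ _) h1.continuous.continuousOn
      intro t ht
      rw [interior_Icc] at ht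
      exact hpos t ht
    have hlt : u (x0 - δ) < u x0 :=
      mono (left_mem_Icc.2 (by linarith)) (right_mem_Icc.2 (by linarith)) (by linarith)
    have hge : u x0 ≤ u (x0 - δ) := hmin ⟨hδ1, by linarith [hx0.2]⟩
    linarith
  -- the case of vanishing first derivative at the minimum
  have snd : deriv u x0 = 0 → False := by
    intro hd0
    have hdd : deriv (deriv u) x0 < 0 := by
      have h4 := hode x0 hx0
      rw [hd0] at h4
      nlinarith
    rcases lt_or_eq_of_le hx0.2 with hx0L' | hx0L'
    · -- x0 < L : descend to the right
      obtain ⟨δ, hδ, hδc, hsmall⟩ := exists_small_neg h3 hdd (sub_pos.2 hx0L')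
      have anti : StrictAntiOn (deriv u) (Icc x0 (x0 + δ)) := by
        apply strictAntiOn_of_deriv_neg (convex_Icc _ _) h2.continuous.continuousOn
        intro t ht
        rw [interior_Icc] at ht
        exact hsmall t (abs_le.2 ⟨by linarith [ht.1], by linarith [ht.2]⟩)
      refine right δ hδ (by linarith) (fun t ht => ?_)
      have := anti (left_mem_Icc.2 (by linarith)) ⟨ht.1.le, ht.2.le⟩ ht.1
      rw [hd0] at this
      exact this
    · -- x0 = L : ascend to the left
      obtain ⟨δ, hδ, hδc, hsmall⟩ := exists_small_neg h3 hdd (sub_pos.2 hx1L)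
      have anti : StrictAntiOn (deriv u) (Icc (x0 - δ) x0) := by
        apply strictAntiOn_of_deriv_neg (convex_Icc _ _) h2.continuous.continuousOn
        intro t ht
        rw [interior_Icc] at ht
        exact hsmall t (abs_le.2 ⟨by linarith [ht.1], by linarith [ht.2]⟩)
      refine left δ hδ (by rw [hx0L']; linarith) (fun t ht => ?_)
      have := anti ⟨ht.1.le, ht.2.le⟩ (right_mem_Icc.2 (by linarith)) ht.2
      rw [hd0] at this
      linarith
  rcases lt_or_eq_of_le hx0.2 with hx0L' | hx0L'
  · -- x0 < L
    have hder : deriv u x0 ≤ 0 := by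
      rcases lt_or_eq_of_le hx0.1 with hx1' | hx1'
      · -- interior local minimum
        have hloc : IsLocalMin u x0 := hmin.isLocalMin (Icc_mem_nhds hx1' hx0L')
        rw [hloc.deriv_eq_zero]
      · -- x0 = x1 : boundary condition
        have hux : u x1 ≤ 0 := by rw [hx1']; exact hle
        rw [← hx1']
        nlinarith [hbc1]
    rcases lt_or_eq_of_le hder with hder' | hder'
    · obtain ⟨δ, hδ, hδc, hsmall⟩ := exists_small_neg h2.continuous hder' (sub_pos.2 hx0L')
      exact right δ hδ (by linarith) (fun t ht =>
        hsmall t (abs_le.2 ⟨by linarith [ht.1], by linarith [ht.2]⟩))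
    · exact snd hder'
  · exact snd (by rw [hx0L']; exact hbcL)

lemma contDiff_two_unpack {u : ℝ → ℝ} (hu : ContDiff ℝ 2 u) :
    Differentiable ℝ u ∧ Differentiable ℝ (deriv u) := by
  rw [show (2 : WithTop ℕ∞) = 1 + 1 from rfl, contDiff_succ_iff_deriv] at hu
  exact ⟨hu.1, (contDiff_one_iff_deriv.1 hu.2.2).1⟩

/-- `w` is a solution of the upstream toxicant boundary value problem with
parameters `d2, a2, h, q` on the interval `[x1, L]`. -/
def IsUpstreamSolution (d2 a2 h q x1 L : ℝ) (w : ℝ → ℝ) : Prop :=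
  ContDiff ℝ 2 w ∧
  (∀ x ∈ Set.Icc x1 L,
      d2 * deriv (deriv w) x - a2 * deriv w x + h - q * w x = 0) ∧
  d2 * deriv w x1 - a2 * w x1 = 0 ∧ deriv w L = 0

/-- the solution of the upstream problem is strictly decreasing
with respect to the degradation rate `q`. -/
theorem upstream_antitone_in_q
    (d2 a2 h x1 L q1 q2 : ℝ) (w1 w2 : ℝ → ℝ)
    (hd2 : 0 < d2) (ha2 : 0 < a2) (hh : 0 < h)
    (hx1 : 0 ≤ x1) (hx1L : x1 < L)
    (hq1 : 0 < q1) (hq12 : q1 < q2)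
    (hw1 : IsUpstreamSolution d2 a2 h q1 x1 L w1)
    (hw2 : IsUpstreamSolution d2 a2 h q2 x1 L w2) :
    ∀ x ∈ Set.Ioo x1 L, w2 x < w1 x := by
  obtain ⟨hc1, hode1, hbc1a, hbc1L⟩ := hw1
  obtain ⟨hc2, hode2, hbc2a, hbc2L⟩ := hw2
  obtain ⟨h11, h12⟩ := contDiff_two_unpack hc1
  obtain ⟨h21, h22⟩ := contDiff_two_unpack hc2
  -- positivity of w2
  have hw2pos : ∀ x ∈ Icc x1 L, 0 < w2 x := by
    apply upstream_max_principle d2 a2 q2 x1 L w2 hd2 ha2 (hq1.trans hq12) hx1L hc2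
    · intro x hx; have := hode2 x hx; linarith
    · linarith [hbc2a]
    · exact hbc2L
  set v : ℝ → ℝ := fun x => w1 x - w2 x with hvdef
  have hdv : deriv v = fun x => deriv w1 x - deriv w2 x :=
    funext fun x => deriv_sub (h11.differentiableAt) (h21.differentiableAt)
  have hddv : deriv (deriv v) = fun x => deriv (deriv w1) x - deriv (deriv w2) x := by
    rw [hdv]
    exact funext fun x => deriv_sub (h12.differentiableAt) (h22.differentiableAt)
  have hvpos : ∀ x ∈ Icc x1 L, 0 < v x := by
    apply upstream_max_principle d2 a2 q1 x1 L v hd2 ha2 hq1 hx1L (hc1.sub hc2)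
    · intro x hx
      rw [hddv, hdv]
      have e1 := hode1 x hx
      have e2 := hode2 x hx
      have hpos := hw2pos x hx
      simp only [hvdef]
      nlinarith
    · rw [hdv]; simp only [hvdef]; linarith
    · rw [hdv]; simp only [hbc1L, hbc2L, sub_zero]
  intro x hx
  have := hvpos x ⟨hx.1.le, hx.2.le⟩
  simpa [hvdef, sub_pos] using this
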